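/- Splitting theorem: every almost ι-complex A is locally equivalent to a direct sum C ⊕ A', where C is the standard complex in the local equivalence class of A and A' is a complex all of whose homology is U-torsion. Concretely, if f : C → A and g : A → C are local maps, then g∘f is an isomorphism and the short exact sequence 0 → C → A → A/im f → 0 splits. -/

import Mathlib

open Polynomial

abbrev F2 : Type := ZMod 2
abbrev R : Type := Polynomial F2

noncomputable section

namespace AI

/-- The variable `U`. -/
def Uu : R := Polynomial.X

/-- The free `R`-module of rank `n`. -/
abbrev V (n : ℕ) : Type := Fin n → R

/-- The `i`-th standard basis vector. -/
def e {n : ℕ} (i : Fin n) : V n := fun j => if j = i then 1 else 0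

/-- The `i`-th standard basis vector over `F2`. -/
def e2 {n : ℕ} (i : Fin n) : Fin n → F2 := fun j => if j = i then 1 else 0

/-- `x` lies in the image of multiplication by `U`. -/
def modU {n : ℕ} (x : V n) : Prop := ∀ j, (x j).coeff 0 = 0

/-- `x` is homogeneous of degree `c` with respect to the generator gradings `gr`
(where `deg U = -2`). -/
def IsHomog {n : ℕ} (gr : Fin n → ℤ) (c : ℤ) (x : V n) : Prop :=
  ∀ (j : Fin n) (m : ℕ), (x j).coeff m ≠ 0 → gr j - 2 * (m : ℤ) = c

/-- `f` is a graded `R`-linear map of degree `dg`. -/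
def GradedMap {m n : ℕ} (gr₁ : Fin m → ℤ) (gr₂ : Fin n → ℤ) (dg : ℤ)
    (f : V m →ₗ[R] V n) : Prop :=
  ∀ i : Fin m, IsHomog gr₂ (gr₁ i + dg) (f (e i))

/-- The raw data of a free finitely generated `ℤ`-graded complex over `R = F[U]`. -/
structure PreCplx where
  n : ℕ
  gr : Fin n → ℤ
  d : V n →ₗ[R] V n

def IsCycle (C : PreCplx) (x : V C.n) : Prop := C.d x = 0

def IsBdry (C : PreCplx) (x : V C.n) : Prop := ∃ y, C.d y = x

/-- `x` is a cycle representing a `U`-nontorsion homology class. -/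
def NontorsionClass (C : PreCplx) (x : V C.n) : Prop :=
  IsCycle C x ∧ ∀ k : ℕ, ¬ IsBdry C ((Uu ^ k) • x)

/-- `U⁻¹H_*(C) ≅ F[U, U⁻¹]`, generated by a degree-zero cycle (normalization
convention: the maximal degree of a `U`-nontorsion cycle class is zero, so the
localized homology is supported in even degrees). -/
def HtowerCond (C : PreCplx) : Prop :=
  ∃ x : V C.n, IsCycle C x ∧ IsHomog C.gr 0 x ∧
    (∀ k : ℕ, ¬ IsBdry C ((Uu ^ k) • x)) ∧
    (∀ y : V C.n, IsCycle C y →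
      ∃ (k : ℕ) (p : R) (z : V C.n), (Uu ^ k) • y = p • x + C.d z)

/-- `C` is a genuine graded chain complex. -/
def IsCplx (C : PreCplx) : Prop :=
  GradedMap C.gr C.gr (-1) C.d ∧ C.d ∘ₗ C.d = 0

/-- `f` and `g` are homotopic mod `U`. -/
def HomotopicModU (C₁ C₂ : PreCplx) (f g : V C₁.n →ₗ[R] V C₂.n) : Prop :=
  ∃ H : V C₁.n →ₗ[R] V C₂.n, GradedMap C₁.gr C₂.gr 1 H ∧
    ∀ x, modU ((f + g + H ∘ₗ C₁.d + C₂.d ∘ₗ H) x)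

/-- The raw data of an almost ι-complex. -/
structure PreAI extends PreCplx where
  ι : V n →ₗ[R] V n

/-- `ω = 1 + ι`. -/
def omega (C : PreAI) : V C.n →ₗ[R] V C.n := LinearMap.id + C.ι

/-- `C` is an almost ι-complex. -/
def IsAICplx (C : PreAI) : Prop :=
  IsCplx C.toPreCplx ∧
  GradedMap C.gr C.gr 0 C.ι ∧
  (∀ x, modU ((C.ι ∘ₗ C.d + C.d ∘ₗ C.ι) x)) ∧
  HomotopicModU C.toPreCplx C.toPreCplx (C.ι ∘ₗ C.ι) LinearMap.id ∧
  HtowerCond C.toPreCplx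

/-- `C` is a genuine ι-complex: `ι` is an honest chain map whose square is
genuinely chain homotopic to the identity. -/
def IsIotaCplx (C : PreAI) : Prop :=
  IsCplx C.toPreCplx ∧
  GradedMap C.gr C.gr 0 C.ι ∧
  C.ι ∘ₗ C.d = C.d ∘ₗ C.ι ∧
  (∃ H : V C.n →ₗ[R] V C.n, GradedMap C.gr C.gr 1 H ∧
    C.ι ∘ₗ C.ι + LinearMap.id = H ∘ₗ C.d + C.d ∘ₗ H) ∧
  HtowerCond C.toPreCplx

/-- A reduced complex: the differential vanishes mod `U`. -/
def Reduced (C : PreAI) : Prop := ∀ x, modU (C.d x)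

/-- `f` is an almost ι-morphism. -/
def isAIMorphism (C₁ C₂ : PreAI) (f : V C₁.n →ₗ[R] V C₂.n) : Prop :=
  GradedMap C₁.gr C₂.gr 0 f ∧
  f ∘ₗ C₁.d = C₂.d ∘ₗ f ∧
  HomotopicModU C₁.toPreCplx C₂.toPreCplx (f ∘ₗ C₁.ι) (C₂.ι ∘ₗ f)

/-- A local map: an almost ι-morphism inducing an isomorphism on `U`-localized
homology (equivalently, with the normalization conventions in force, preserving
`U`-nontorsion cycle classes). -/
def isLocalMap (C₁ C₂ : PreAI) (f : V C₁.n →ₗ[R] V C₂.n) : Prop :=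
  isAIMorphism C₁ C₂ f ∧
  ∀ x, NontorsionClass C₁.toPreCplx x → NontorsionClass C₂.toPreCplx (f x)

/-- Local equivalence of almost ι-complexes. -/
def LocallyEquiv (C₁ C₂ : PreAI) : Prop :=
  (∃ f, isLocalMap C₁ C₂ f) ∧ (∃ g, isLocalMap C₂ C₁ g)

/-- The tensor product (over `R`) of linear maps between free modules,
in the bases indexed by `finProdFinEquiv`. -/
def tmap {m n m' n' : ℕ} (f : V m →ₗ[R] V m') (g : V n →ₗ[R] V n') :
    V (m * n) →ₗ[R] V (m' * n') where
  toFun x := fun p => ∑ q : Fin (m * n),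
    x q * f (e (finProdFinEquiv.symm q).1) (finProdFinEquiv.symm p).1
        * g (e (finProdFinEquiv.symm q).2) (finProdFinEquiv.symm p).2
  map_add' x y := by
    funext p
    simp [Pi.add_apply, add_mul, Finset.sum_add_distrib]
  map_smul' c x := by
    funext p
    simp only [RingHom.id_apply, Pi.smul_apply, smul_eq_mul, Finset.mul_sum]
    exact Finset.sum_congr rfl fun q _ => by ring

/-- The tensor product of complexes. -/
def tensorPre (C₁ C₂ : PreCplx) : PreCplx where
  n := C₁.n * C₂.n
  gr := fun q => C₁.gr (finProdFinEquiv.symm q).1 + C₂.gr (finProdFinEquiv.symm q).2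
  d := tmap C₁.d LinearMap.id + tmap LinearMap.id C₂.d

/-- The tensor product of almost ι-complexes. -/
def tensorAI (C₁ C₂ : PreAI) : PreAI where
  toPreCplx := tensorPre C₁.toPreCplx C₂.toPreCplx
  ι := tmap C₁.ι C₂.ι

/-- The transpose of a square matrix map (the dual map in the dual basis). -/
def tr {n : ℕ} (f : V n →ₗ[R] V n) : V n →ₗ[R] V n where
  toFun x := fun j => ∑ i : Fin n, x i * f (e j) i
  map_add' x y := by
    funext j
    simp [Pi.add_apply, add_mul, Finset.sum_add_distrib]
  map_smul' c x := by
    funext j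
    simp only [RingHom.id_apply, Pi.smul_apply, smul_eq_mul, Finset.mul_sum]
    exact Finset.sum_congr rfl fun i _ => by ring

/-- The dual complex. -/
def dualPre (C : PreCplx) : PreCplx where
  n := C.n
  gr := fun i => -C.gr i
  d := tr C.d

/-- The dual almost ι-complex. -/
def dualAI (C : PreAI) : PreAI where
  toPreCplx := dualPre C.toPreCplx
  ι := tr C.ι

/-- The trivial complex `C(0) = (F[U], ∂ = 0, ι = id)`. -/
def cZero : PreAI := ⟨⟨1, fun _ => 0, 0⟩, LinearMap.id⟩

/-- The contraction map `C ⊗ C^∨ → F[U]`, `x ⊗ y ↦ y(x)`. -/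
def contr (n : ℕ) : V (n * n) →ₗ[R] V 1 where
  toFun x := fun _ => ∑ i : Fin n, x (finProdFinEquiv (i, i))
  map_add' x y := by funext j; simp [Pi.add_apply, Finset.sum_add_distrib]
  map_smul' c x := by
    funext j
    simp only [RingHom.id_apply, Pi.smul_apply, smul_eq_mul, Finset.mul_sum]

/-! ### Standard and augmented complexes -/

/-- The `i`-th symbol (0-indexed) of the parameter sequence, padded by zeros. -/
def seqAt (M : List ℤ) (i : ℕ) : ℤ := M.getD i 0

/-- Grading step of a `b`-arrow. -/
def bstep (b : ℤ) : ℤ := (if 0 < b then 1 else -1) - 2 * b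

/-- Grading of the generator `T_i` of the standard/augmented complex. -/
def stdGr (M : List ℤ) (i : ℕ) : ℤ :=
  ∑ s ∈ Finset.range i, if s % 2 = 1 then bstep (seqAt M s) else 0

/-- A linear endomorphism of `V n` given by a matrix of coefficients. -/
def ofMatrix {n : ℕ} (c : ℕ → ℕ → R) : V n →ₗ[R] V n where
  toFun x := fun j => ∑ i : Fin n, x i * c i j
  map_add' x y := by
    funext j
    simp [Pi.add_apply, add_mul, Finset.sum_add_distrib]
  map_smul' r x := by
    funext j
    simp only [RingHom.id_apply, Pi.smul_apply, smul_eq_mul, Finset.mul_sum]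
    exact Finset.sum_congr rfl fun i _ => by ring

/-- Matrix of the differential of the standard/augmented complex: the `b`-symbol
at (0-indexed) odd position `s` of `M` relates `T_s` and `T_{s+1}`. -/
def dCoef (M : List ℤ) (i j : ℕ) : R :=
  if i % 2 = 1 ∧ seqAt M i < 0 ∧ j = i + 1 then Uu ^ (seqAt M i).natAbs
  else if i % 2 = 0 ∧ 0 < i ∧ 0 < seqAt M (i - 1) ∧ j + 1 = i then
    Uu ^ (seqAt M (i - 1)).natAbs
  else 0

/-- Matrix of `ω = 1 + ι` on the standard/augmented complex: the `a`-symbol at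
(0-indexed) even position `s` of `M` relates `T_s` and `T_{s+1}`. -/
def wCoef (M : List ℤ) (i j : ℕ) : R :=
  if i % 2 = 0 ∧ seqAt M i = -1 ∧ j = i + 1 then 1
  else if i % 2 = 1 ∧ seqAt M (i - 1) = 1 ∧ j + 1 = i then 1
  else 0

/-- Matrix of `ι = 1 + ω` (char 2). -/
def iCoef (M : List ℤ) (i j : ℕ) : R :=
  (if i = j then 1 else 0) + wCoef M i j

/-- The standard (even length) or augmented (odd length) complex on generators
`T_0, …, T_{M.length}` determined by the symbol sequence `M`. -/
def symCplx (M : List ℤ) : PreAI :=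
  ⟨⟨M.length + 1, fun i => stdGr M i, ofMatrix (dCoef M)⟩, ofMatrix (iCoef M)⟩

/-- Validity of a standard parameter sequence. -/
def StdParams (M : List ℤ) : Prop :=
  M.length % 2 = 0 ∧
  ∀ i < M.length, if i % 2 = 0 then seqAt M i = 1 ∨ seqAt M i = -1 else seqAt M i ≠ 0

/-- Validity of an augmented parameter sequence. -/
def AugParams (M : List ℤ) : Prop :=
  M.length % 2 = 1 ∧
  ∀ i < M.length, if i % 2 = 0 then seqAt M i = 1 ∨ seqAt M i = -1 else seqAt M i ≠ 0

/-- The modified order `<!` on `ℤ`: `−1 <! −2 <! ⋯ <! 0 <! ⋯ <! 2 <! 1`. -/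
def ltB (x y : ℤ) : Prop :=
  (x < 0 ∧ 0 ≤ y) ∨ (x ≤ 0 ∧ 0 < y) ∨ (x < 0 ∧ y < 0 ∧ y < x) ∨ (0 < x ∧ 0 < y ∧ y < x)

def leB (x y : ℤ) : Prop := ltB x y ∨ x = y

/-- Strict lexicographic order on (zero-padded) parameter sequences. -/
def lexLt (M M' : List ℤ) : Prop :=
  ∃ k : ℕ, (∀ i < k, seqAt M i = seqAt M' i) ∧ ltB (seqAt M k) (seqAt M' k)

def lexLe (M M' : List ℤ) : Prop := lexLt M M' ∨ ∀ i, seqAt M i = seqAt M' i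

/-- A short map from the standard (even `M.length`) or augmented (odd `M.length`)
complex determined by `M` to `A`: the `ω`-condition (standard case) resp. the
`∂`-condition (augmented case) is waived on the final generator. -/
def isShortMap (M : List ℤ) (A : PreAI) (f : V (M.length + 1) →ₗ[R] V A.n) : Prop :=
  GradedMap (symCplx M).gr A.gr 0 f ∧
  (∀ i : Fin (M.length + 1), ((i : ℕ) < M.length ∨ M.length % 2 = 0) →
    A.d (f (e i)) = f ((symCplx M).d (e i))) ∧
  (∀ i : Fin (M.length + 1), ((i : ℕ) < M.length ∨ M.length % 2 = 1) →
    modU ((omega A) (f (e i)) + f ((omega (symCplx M)) (e i))))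

/-- A local short map: `T_0` goes to a `U`-nontorsion cycle class. -/
def isLocalShortMap (M : List ℤ) (A : PreAI) (f : V (M.length + 1) →ₗ[R] V A.n) : Prop :=
  isShortMap M A f ∧ NontorsionClass A.toPreCplx (f (e ⟨0, Nat.succ_pos _⟩))

/-- The sequence of invariants `s_i(A)` (1-indexed in the paper; 0-indexed here):
`s k` is the `≤!`-maximum of the `(k+1)`-st symbols among standard complexes
locally mapping to `A` whose first `k` symbols are `s 0, …, s (k-1)`. -/
def IsInvariantSeq (A : PreAI) (s : ℕ → ℤ) : Prop :=
  ∀ k : ℕ,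
    (∃ M : List ℤ, StdParams M ∧ (∃ f, isLocalMap (symCplx M) A f) ∧
      ∀ i ≤ k, seqAt M i = s i) ∧
    (∀ M : List ℤ, StdParams M → (∃ f, isLocalMap (symCplx M) A f) →
      (∀ i < k, seqAt M i = s i) → leB (seqAt M k) (s k))

/-- Reduction mod `U` of a linear map, as an `F₂`-linear map. -/
def mapHat {m n : ℕ} (f : V m →ₗ[R] V n) : (Fin m → F2) →ₗ[F2] (Fin n → F2) where
  toFun x := fun j => ∑ i : Fin m, x i * (f (e i) j).coeff 0
  map_add' x y := by
    funext j
    simp [Pi.add_apply, add_mul, Finset.sum_add_distrib]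
  map_smul' c x := by
    funext j
    simp only [RingHom.id_apply, Pi.smul_apply, smul_eq_mul, Finset.mul_sum]
    exact Finset.sum_congr rfl fun i _ => by ring

/-- The induced action `ω̂` on `C/U`. -/
def wHat (C : PreAI) : (Fin C.n → F2) →ₗ[F2] (Fin C.n → F2) := mapHat (omega C)

end AI

/-!
The composite `φ = g ∘ f` is a local self-map of the standard complex `C`, and it suffices to
show `det φ = 1`. Since `C` is reduced, `φ` commutes with `∂` exactly and with `ω` modulo `U`,
and it preserves the grading, so `det φ` is a constant: the determinant of `φ mod U`. In the
Leibniz expansion of that determinant, a non-identity permutation would give a nonconstant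
cycle of entries that are nonzero mod `U`. Such a cycle can be moved one step up along the
arrows of `C` (along `ω`-arrows mod `U`; along `∂`-arrows exactly, returning to mod `U` by the
grading) until it reaches the last generator, which carries no `ω`-arrow: a contradiction. The
diagonal entries mod `U` all agree with the one at `T₀`, which is `1` because `φ` preserves the
nontorsion class of `T₀`. Hence `φ` is invertible and `φ⁻¹ ∘ g` is a retraction of `f`.
-/

theorem Function.Periodic.forall_of_imp_succ {q : ℕ → Prop} {r : ℕ} (hq : Function.Periodic q r)
    (hr : 0 < r) (hsucc : ∀ t, q t → q (t + 1)) {s : ℕ} (hs : q s) (u : ℕ) : q u := by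
  have hup : ∀ d, q (s + d) := fun d => by
    induction d with
    | zero => exact hs
    | succ d ih => exact hsucc _ ih
  have hs_le : s ≤ s * r := Nat.le_mul_of_pos_right s hr
  have := hup (u + s * r - s)
  rwa [show s + (u + s * r - s) = u + s * r by omega, ← Nat.cast_id s, hq.nat_mul s u] at this

theorem Function.Periodic.forall_of_succ_imp {q : ℕ → Prop} {r : ℕ} (hq : Function.Periodic q r)
    (hr : 0 < r) (hsucc : ∀ t, q (t + 1) → q t) {s : ℕ} (hs : q s) (u : ℕ) : q u := by
  by_contra hu
  exact (hq.comp Not).forall_of_imp_succ hr (fun t h h' => h (hsucc t h')) hu s hs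

theorem Function.Periodic.eq_of_monotone {β : Type*} [PartialOrder β] {f : ℕ → β} {r : ℕ}
    (hf : Function.Periodic f r) (hr : 0 < r) (hmono : Monotone f) (s t : ℕ) : f s = f t := by
  have key : ∀ s t, f s ≤ f t := fun s t =>
    calc f s ≤ f (t + s * r) := hmono (by nlinarith)
      _ = f t := by simpa using hf.nat_mul s t
  exact le_antisymm (key s t) (key t s)

namespace AI

open Finset

lemma vec_add_self {n : ℕ} (y : V n) : y + y = 0 := by
  ext j; exact CharTwo.add_self_eq_zero _

lemma e_eq_single {n : ℕ} (i : Fin n) : e i = Pi.single i 1 := by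
  ext j; simp [e, Pi.single_apply]

lemma map_apply_eq_sum {a b : ℕ} (ψ : V a →ₗ[R] V b) (x : V a) (j : Fin b) :
    ψ x j = ∑ l, x l * ψ (e l) j := by
  have he : ∀ l : Fin a, (fun k => if l = k then (1 : R) else 0) = e l :=
    fun l => funext fun k => by simp [e, eq_comm]
  conv_lhs => rw [pi_eq_sum_univ x]
  simp [he]

lemma toMatrix'_apply_eq {n : ℕ} (ψ : V n →ₗ[R] V n) (i j : Fin n) :
    LinearMap.toMatrix' ψ i j = ψ (e j) i := by
  rw [LinearMap.toMatrix'_apply, e_eq_single]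

lemma ofMatrix_apply {n : ℕ} (c : ℕ → ℕ → R) (x : V n) (j : Fin n) :
    ofMatrix c x j = ∑ l, x l * c l j := rfl

lemma ofMatrix_apply_e {n : ℕ} (c : ℕ → ℕ → R) (i j : Fin n) : ofMatrix c (e i) j = c i j := by
  rw [ofMatrix_apply, Fintype.sum_eq_single i fun l hl => by simp [e, hl]]
  simp [e]

lemma modU.add {n : ℕ} {x y : V n} (hx : modU x) (hy : modU y) : modU (x + y) := fun j => by
  simp [hx j, hy j]

lemma modU.map {a b : ℕ} {x : V a} (hx : modU x) (ψ : V a →ₗ[R] V b) : modU (ψ x) := fun j => by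
  rw [map_apply_eq_sum, finsetSum_coeff]
  exact sum_eq_zero fun l _ => by rw [mul_coeff_zero, hx l, zero_mul]

lemma IsHomog.add {n : ℕ} {gr : Fin n → ℤ} {c : ℤ} {x y : V n} (hx : IsHomog gr c x)
    (hy : IsHomog gr c y) : IsHomog gr c (x + y) := fun j m hm => by
  by_cases hxm : (x j).coeff m = 0
  · exact hy j m (by simpa [hxm] using hm)
  · exact hx j m hxm

lemma IsHomog.map {a b : ℕ} {gr₁ : Fin a → ℤ} {gr₂ : Fin b → ℤ} {dg c : ℤ} {x : V a}
    (hx : IsHomog gr₁ c x) {ψ : V a →ₗ[R] V b} (hψ : GradedMap gr₁ gr₂ dg ψ) :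
    IsHomog gr₂ (c + dg) (ψ x) := fun j m hm => by
  rw [map_apply_eq_sum, finsetSum_coeff] at hm
  obtain ⟨l, -, hl⟩ := exists_ne_zero_of_sum_ne_zero hm
  rw [coeff_mul] at hl
  obtain ⟨⟨m₁, m₂⟩, hmem, hne⟩ := exists_ne_zero_of_sum_ne_zero hl
  have h₁ := hx l m₁ (left_ne_zero_of_mul hne)
  have h₂ := hψ l j m₂ (right_ne_zero_of_mul hne)
  have hm : m₁ + m₂ = m := mem_antidiagonal.mp hmem
  omega

lemma GradedMap.comp {a b c : ℕ} {gr₁ : Fin a → ℤ} {gr₂ : Fin b → ℤ} {gr₃ : Fin c → ℤ}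
    {dg₁ dg₂ : ℤ} {ψ : V a →ₗ[R] V b} {χ : V b →ₗ[R] V c} (hχ : GradedMap gr₂ gr₃ dg₂ χ)
    (hψ : GradedMap gr₁ gr₂ dg₁ ψ) : GradedMap gr₁ gr₃ (dg₁ + dg₂) (χ ∘ₗ ψ) := fun i => by
  simpa [add_assoc] using IsHomog.map (hψ i) hχ

lemma GradedMap.add {a b : ℕ} {gr₁ : Fin a → ℤ} {gr₂ : Fin b → ℤ} {dg : ℤ}
    {ψ χ : V a →ₗ[R] V b} (hψ : GradedMap gr₁ gr₂ dg ψ) (hχ : GradedMap gr₁ gr₂ dg χ) :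
    GradedMap gr₁ gr₂ dg (ψ + χ) := fun i => IsHomog.add (hψ i) (hχ i)

theorem isAIMorphism.comp {C₁ C₂ C₃ : PreAI} {f : V C₁.n →ₗ[R] V C₂.n}
    {g : V C₂.n →ₗ[R] V C₃.n} (hg : isAIMorphism C₂ C₃ g) (hf : isAIMorphism C₁ C₂ f) :
    isAIMorphism C₁ C₃ (g ∘ₗ f) := by
  obtain ⟨hf_gr, hf_d, Hf, hHf_gr, hHf⟩ := hf
  obtain ⟨hg_gr, hg_d, Hg, hHg_gr, hHg⟩ := hg
  refine ⟨by simpa using GradedMap.comp hg_gr hf_gr, ?_, g ∘ₗ Hf + Hg ∘ₗ f,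
    GradedMap.add (GradedMap.comp hg_gr hHf_gr) (by simpa using GradedMap.comp hHg_gr hf_gr),
    fun x => ?_⟩
  · rw [LinearMap.comp_assoc, hf_d, ← LinearMap.comp_assoc, hg_d, LinearMap.comp_assoc]
  · have hgd := LinearMap.congr_fun hg_d (Hf x)
    have hfd := LinearMap.congr_fun hf_d x
    simp only [LinearMap.comp_apply] at hgd hfd
    convert ((hHf x).map g).add (hHg (f x)) using 1
    simp only [LinearMap.add_apply, LinearMap.comp_apply, map_add, hgd, hfd]
    linear_combination (norm := abel) -vec_add_self (g (C₂.ι (f x)))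

theorem isLocalMap.comp {C₁ C₂ C₃ : PreAI} {f : V C₁.n →ₗ[R] V C₂.n}
    {g : V C₂.n →ₗ[R] V C₃.n} (hg : isLocalMap C₂ C₃ g) (hf : isLocalMap C₁ C₂ f) :
    isLocalMap C₁ C₃ (g ∘ₗ f) :=
  ⟨hg.1.comp hf.1, fun x hx => hg.2 _ (hf.2 x hx)⟩

theorem isAIMorphism.modU_omega_comm {C₁ C₂ : PreAI} (h₁ : Reduced C₁) (h₂ : Reduced C₂)
    {f : V C₁.n →ₗ[R] V C₂.n} (hf : isAIMorphism C₁ C₂ f) (x : V C₁.n) :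
    modU (f (omega C₁ x) + omega C₂ (f x)) := by
  obtain ⟨-, -, H, -, hH⟩ := hf
  convert ((hH x).add ((h₁ x).map H)).add (h₂ (H x)) using 1
  simp only [omega, LinearMap.add_apply, LinearMap.comp_apply, LinearMap.id_apply, map_add]
  linear_combination (norm := abel) vec_add_self (f x) - vec_add_self (H (C₁.d x))
    - vec_add_self (C₂.d (H x))

def IsUHomog (d : ℤ) (p : R) : Prop := ∀ m : ℕ, p.coeff m ≠ 0 → 2 * (m : ℤ) = d

lemma IsUHomog.mul {d₁ d₂ : ℤ} {p q : R} (hp : IsUHomog d₁ p) (hq : IsUHomog d₂ q) :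
    IsUHomog (d₁ + d₂) (p * q) := fun m hm => by
  rw [coeff_mul] at hm
  obtain ⟨⟨a, b⟩, hab, hne⟩ := exists_ne_zero_of_sum_ne_zero hm
  have ha := hp a (left_ne_zero_of_mul hne)
  have hb := hq b (right_ne_zero_of_mul hne)
  have : a + b = m := mem_antidiagonal.mp hab
  omega

lemma isUHomog_prod {ι : Type*} (s : Finset ι) {p : ι → R} {d : ι → ℤ}
    (h : ∀ i ∈ s, IsUHomog (d i) (p i)) : IsUHomog (∑ i ∈ s, d i) (∏ i ∈ s, p i) := by
  classical
  induction s using Finset.induction_on with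
  | empty => intro m hm; simp only [prod_empty, coeff_one] at hm; simp_all
  | insert a s ha ih =>
    rw [sum_insert ha, prod_insert ha]
    exact (h a (mem_insert_self a s)).mul (ih fun i hi => h i (mem_insert_of_mem hi))

/-- A degree-preserving endomorphism has a constant determinant: every term of the Leibniz
expansion has total `U`-degree `∑ i, (gr (σ i) - gr i) / 2 = 0`. -/
lemma coeff_det_eq_zero {n : ℕ} {gr : Fin n → ℤ} {φ : V n →ₗ[R] V n} (hgr : GradedMap gr gr 0 φ)
    {k : ℕ} (hk : k ≠ 0) : (LinearMap.det φ).coeff k = 0 := by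
  rw [← LinearMap.det_toMatrix', Matrix.det_apply, finsetSum_coeff]
  refine sum_eq_zero fun σ _ => ?_
  rw [Units.smul_def, coeff_smul]
  convert smul_zero _
  by_contra hne
  have hhom : IsUHomog (∑ i, (gr (σ i) - gr i)) (∏ i, LinearMap.toMatrix' φ (σ i) i) :=
    isUHomog_prod _ fun i _ m hm => by
      have := hgr i (σ i) m (by rwa [toMatrix'_apply_eq] at hm)
      omega
  have hsum : ∑ i, (gr (σ i) - gr i) = 0 := by
    rw [sum_sub_distrib, Equiv.sum_comp σ gr, sub_self]
  have := hhom k hne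
  omega

lemma coeff_zero_det {n : ℕ} (φ : V n →ₗ[R] V n) :
    (LinearMap.det φ).coeff 0 = (Matrix.of fun i j : Fin n => (φ (e i) j).coeff 0).det := by
  rw [← LinearMap.det_toMatrix', ← constantCoeff_apply, RingHom.map_det,
    ← Matrix.det_transpose]
  congr 1
  ext i j
  simp [e_eq_single]

section StandardComplex

variable {M : List ℤ}

/-- The generator `T_p` is the source (target) of an arrow of `ω` (of `∂`), whose other end is
`T_(omegaMate p)` (`T_(dMate p)`); this is how `wCoef` and `dCoef` are read below. -/
def IsOmegaSource (M : List ℤ) (p : ℕ) : Prop :=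
  (p % 2 = 0 ∧ seqAt M p = -1) ∨ (p % 2 = 1 ∧ seqAt M (p - 1) = 1)

def IsOmegaTarget (M : List ℤ) (p : ℕ) : Prop :=
  (p % 2 = 1 ∧ seqAt M (p - 1) = -1) ∨ (p % 2 = 0 ∧ seqAt M p = 1)

def IsDSource (M : List ℤ) (p : ℕ) : Prop :=
  (p % 2 = 1 ∧ seqAt M p < 0) ∨ (p % 2 = 0 ∧ 0 < p ∧ 0 < seqAt M (p - 1))

def IsDTarget (M : List ℤ) (p : ℕ) : Prop :=
  (p % 2 = 0 ∧ 0 < p ∧ seqAt M (p - 1) < 0) ∨ (p % 2 = 1 ∧ 0 < seqAt M p)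

def omegaMate (p : ℕ) : ℕ := if p % 2 = 0 then p + 1 else p - 1

def dMate (p : ℕ) : ℕ := if p % 2 = 1 then p + 1 else p - 1

/-- The exponent of `U` on the `∂`-arrow at `p`, whichever its direction. -/
def dPow (M : List ℤ) (p : ℕ) : ℕ :=
  if p % 2 = 1 then (seqAt M p).natAbs else (seqAt M (p - 1)).natAbs

lemma dPow_dMate (M : List ℤ) (p : ℕ) : dPow M (dMate p) = dPow M p := by
  unfold dPow dMate
  split_ifs <;> first | rfl | omega | (congr 2; omega)

lemma omegaMate_involutive : Function.Involutive omegaMate := fun p => by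
  unfold omegaMate; split_ifs <;> omega

lemma dMate_involutive : Function.Involutive dMate := fun p => by
  unfold dMate; split_ifs <;> omega

lemma wCoef_ne_zero {i j : ℕ} (h : wCoef M i j ≠ 0) :
    (IsOmegaSource M i ∧ j = omegaMate i) ∧ (IsOmegaTarget M j ∧ i = omegaMate j) := by
  unfold wCoef at h
  split_ifs at h with h₁ h₂
  · obtain ⟨hi, hs, rfl⟩ := h₁
    refine ⟨⟨Or.inl ⟨hi, hs⟩, by simp [omegaMate, hi]⟩, Or.inl ⟨by omega, by simpa using hs⟩, ?_⟩
    unfold omegaMate; split_ifs <;> omega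
  · obtain ⟨hi, hs, hj⟩ := h₂
    obtain rfl : j = i - 1 := by omega
    refine ⟨⟨Or.inr ⟨hi, hs⟩, by simp [omegaMate, hi]⟩, Or.inr ⟨by omega, hs⟩, ?_⟩
    unfold omegaMate; split_ifs <;> omega
  · exact absurd rfl h

lemma dCoef_ne_zero {i j : ℕ} (h : dCoef M i j ≠ 0) :
    (IsDSource M i ∧ j = dMate i) ∧ (IsDTarget M j ∧ i = dMate j) := by
  unfold dCoef at h
  split_ifs at h with h₁ h₂
  · obtain ⟨hi, hs, rfl⟩ := h₁
    refine ⟨⟨Or.inl ⟨hi, hs⟩, by simp [dMate, hi]⟩,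
      Or.inl ⟨by omega, by omega, by simpa using hs⟩, ?_⟩
    unfold dMate; split_ifs <;> omega
  · obtain ⟨hi, hi0, hs, hj⟩ := h₂
    obtain rfl : j = i - 1 := by omega
    refine ⟨⟨Or.inr ⟨hi, hi0, hs⟩, by simp [dMate]; omega⟩, Or.inr ⟨by omega, hs⟩, ?_⟩
    unfold dMate; split_ifs <;> omega
  · exact absurd rfl h

lemma wCoef_omegaMate_of_isOmegaSource {i : ℕ} (h : IsOmegaSource M i) :
    wCoef M i (omegaMate i) = 1 := by
  unfold wCoef omegaMate
  rcases h with ⟨hi, hs⟩ | ⟨hi, hs⟩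
  · simp [hi, hs]
  · simp [hi, hs, show i - 1 + 1 = i by omega]

lemma wCoef_omegaMate_of_isOmegaTarget {j : ℕ} (h : IsOmegaTarget M j) :
    wCoef M (omegaMate j) j = 1 := by
  unfold wCoef omegaMate
  rcases h with ⟨hj, hs⟩ | ⟨hj, hs⟩
  · simp [hj, show (j - 1) % 2 = 0 by omega, show j - 1 + 1 = j by omega, hs]
  · simp [hj, show (j + 1) % 2 = 1 by omega, hs]

lemma dCoef_dMate_of_isDSource {i : ℕ} (h : IsDSource M i) :
    dCoef M i (dMate i) = Uu ^ dPow M i := by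
  unfold dCoef dMate dPow
  rcases h with ⟨hi, hs⟩ | ⟨hi, hi0, hs⟩
  · simp [hi, hs]
  · simp [hi, hi0, hs, show i - 1 + 1 = i by omega]

lemma dCoef_dMate_of_isDTarget {j : ℕ} (h : IsDTarget M j) :
    dCoef M (dMate j) j = Uu ^ dPow M j := by
  unfold dCoef dMate dPow
  rcases h with ⟨hj, hj0, hs⟩ | ⟨hj, hs⟩
  · simp [hj, show (j - 1) % 2 = 1 by omega, hs, show j - 1 + 1 = j by omega]
  · simp [hj, show (j + 1) % 2 = 0 by omega, hs]

lemma IsOmegaSource.mate {p : ℕ} (h : IsOmegaSource M p) :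
    IsOmegaTarget M (omegaMate p) :=
  (wCoef_ne_zero (by rw [wCoef_omegaMate_of_isOmegaSource h]; exact one_ne_zero)).2.1

lemma IsOmegaTarget.mate {p : ℕ} (h : IsOmegaTarget M p) :
    IsOmegaSource M (omegaMate p) :=
  (wCoef_ne_zero (by rw [wCoef_omegaMate_of_isOmegaTarget h]; exact one_ne_zero)).1.1

lemma IsDSource.mate {p : ℕ} (h : IsDSource M p) : IsDTarget M (dMate p) :=
  (dCoef_ne_zero (by rw [dCoef_dMate_of_isDSource h]; exact pow_ne_zero _ X_ne_zero)).2.1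

lemma IsDTarget.mate {p : ℕ} (h : IsDTarget M p) : IsDSource M (dMate p) :=
  (dCoef_ne_zero (by rw [dCoef_dMate_of_isDTarget h]; exact pow_ne_zero _ X_ne_zero)).1.1

lemma IsDSource.pos {p : ℕ} (h : IsDSource M p) : 0 < p := by
  rcases h with ⟨h, -⟩ | ⟨-, h, -⟩ <;> omega

lemma IsDTarget.pos {p : ℕ} (h : IsDTarget M p) : 0 < p := by
  rcases h with ⟨-, h, -⟩ | ⟨h, -⟩ <;> omega

lemma lt_length_of_seqAt_ne_zero {p : ℕ} (h : seqAt M p ≠ 0) : p < M.length := by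
  by_contra hp
  exact h (List.getD_eq_default _ _ (not_lt.mp hp))

lemma omegaMate_lt {p : ℕ} (hp : p < M.length + 1)
    (h : IsOmegaSource M p ∨ IsOmegaTarget M p) : omegaMate p < M.length + 1 := by
  unfold omegaMate
  split_ifs with hp2
  · have : seqAt M p ≠ 0 := by
      rcases h with (⟨h2, hs⟩ | ⟨h2, -⟩) | (⟨h2, -⟩ | ⟨h2, hs⟩) <;> omega
    have := lt_length_of_seqAt_ne_zero this
    omega
  · omega

lemma dMate_lt {p : ℕ} (hp : p < M.length + 1)
    (h : IsDSource M p ∨ IsDTarget M p) : dMate p < M.length + 1 := by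
  unfold dMate
  split_ifs with hp2
  · have : seqAt M p ≠ 0 := by
      rcases h with (⟨h2, hs⟩ | ⟨h2, -⟩) | (⟨h2, -⟩ | ⟨h2, hs⟩) <;> omega
    have := lt_length_of_seqAt_ne_zero this
    omega
  · omega

lemma isOmegaSource_or_isOmegaTarget (hM : StdParams M) {p : ℕ} (hp : p < M.length) :
    IsOmegaSource M p ∨ IsOmegaTarget M p := by
  rcases Nat.mod_two_eq_zero_or_one p with hp2 | hp2
  · have := hM.2 p hp
    rw [if_pos hp2] at this
    rcases this with hs | hs
    · exact Or.inr (Or.inr ⟨hp2, hs⟩)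
    · exact Or.inl (Or.inl ⟨hp2, hs⟩)
  · have := hM.2 (p - 1) (by omega)
    rw [if_pos (by omega)] at this
    rcases this with hs | hs
    · exact Or.inl (Or.inr ⟨hp2, hs⟩)
    · exact Or.inr (Or.inl ⟨hp2, hs⟩)

lemma isDSource_or_isDTarget (hM : StdParams M) {p : ℕ} (hp0 : 0 < p) (hp : p ≤ M.length) :
    IsDSource M p ∨ IsDTarget M p := by
  rcases Nat.mod_two_eq_zero_or_one p with hp2 | hp2
  · have := hM.2 (p - 1) (by omega)
    rw [if_neg (by omega)] at this
    rcases this.lt_or_gt with hs | hs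
    · exact Or.inr (Or.inl ⟨hp2, hp0, hs⟩)
    · exact Or.inl (Or.inr ⟨hp2, hp0, hs⟩)
  · have := hM.2 p (by have := hM.1; omega)
    rw [if_neg (by omega)] at this
    rcases this.lt_or_gt with hs | hs
    · exact Or.inl (Or.inl ⟨hp2, hs⟩)
    · exact Or.inr (Or.inr ⟨hp2, hs⟩)

lemma not_isOmegaSource_length (hM : StdParams M) : ¬ IsOmegaSource M M.length := by
  have := hM.1
  rintro (⟨-, hs⟩ | ⟨h, -⟩)
  · rw [seqAt, List.getD_eq_default _ _ le_rfl] at hs; omega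
  · omega

lemma not_isOmegaTarget_length (hM : StdParams M) : ¬ IsOmegaTarget M M.length := by
  have := hM.1
  rintro (⟨h, -⟩ | ⟨-, hs⟩)
  · omega
  · rw [seqAt, List.getD_eq_default _ _ le_rfl] at hs; omega

lemma reduced_symCplx (M : List ℤ) : Reduced (symCplx M) := fun x j => by
  show (∑ l, x l * dCoef M l j).coeff 0 = 0
  rw [finsetSum_coeff]
  refine sum_eq_zero fun l _ => ?_
  rw [mul_coeff_zero]
  by_cases h : dCoef M l j = 0
  · rw [h, coeff_zero, mul_zero]
  · obtain ⟨⟨hl, hj⟩, -⟩ := dCoef_ne_zero h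
    have : 0 < dPow M l := by
      unfold dPow
      rcases hl with ⟨hl2, hs⟩ | ⟨hl2, -, hs⟩ <;> simp [hl2] <;> omega
    rw [hj, dCoef_dMate_of_isDSource hl, Uu, coeff_X_pow, if_neg (by omega), mul_zero]

end StandardComplex

/-- Junk value: `p` itself when `μ p` is out of range. -/
def finMate {n : ℕ} (μ : ℕ → ℕ) (p : Fin n) : Fin n := if h : μ p < n then ⟨μ p, h⟩ else p

lemma finMate_val {n : ℕ} {μ : ℕ → ℕ} {p : Fin n} (h : μ p < n) : (finMate μ p : ℕ) = μ p := by
  simp [finMate, h]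

lemma finMate_finMate {n : ℕ} {μ : ℕ → ℕ} (hμ : Function.Involutive μ) {p : Fin n}
    (h : μ p < n) : finMate μ (finMate μ p) = p := by
  have h' : μ (finMate μ p) < n := by rw [finMate_val h, hμ]; exact p.isLt
  exact Fin.ext (by rw [finMate_val h', finMate_val h, hμ])

lemma finMate_injective_of_lt {n : ℕ} {μ : ℕ → ℕ} (hμ : Function.Involutive μ) {p q : Fin n}
    (hp : μ p < n) (hq : μ q < n) (h : finMate μ p = finMate μ q) : p = q := by
  rw [← finMate_finMate hμ hp, h, finMate_finMate hμ hq]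

section SumLemmas

variable {M : List ℤ} (v : Fin (M.length + 1) → R)

lemma sum_mul_wCoef_of_isOmegaTarget {j : Fin (M.length + 1)} (hj : IsOmegaTarget M j) :
    ∑ l, v l * wCoef M l j = v (finMate omegaMate j) := by
  have hr := omegaMate_lt j.isLt (Or.inr hj)
  rw [Fintype.sum_eq_single (finMate omegaMate j), finMate_val hr,
    wCoef_omegaMate_of_isOmegaTarget hj, mul_one]
  intro l hl
  rw [mul_eq_zero_of_right]
  by_contra h
  exact hl (Fin.ext ((finMate_val hr).symm ▸ (wCoef_ne_zero h).2.2))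

lemma sum_mul_wCoef_of_not_isOmegaTarget {j : Fin (M.length + 1)} (hj : ¬ IsOmegaTarget M j) :
    ∑ l, v l * wCoef M l j = 0 :=
  sum_eq_zero fun _ _ => mul_eq_zero_of_right _ (not_not.mp fun h => hj (wCoef_ne_zero h).2.1)

lemma sum_wCoef_mul_of_isOmegaSource {i : Fin (M.length + 1)} (hi : IsOmegaSource M i) :
    ∑ l : Fin (M.length + 1), wCoef M i l * v l = v (finMate omegaMate i) := by
  have hr := omegaMate_lt i.isLt (Or.inl hi)
  rw [Fintype.sum_eq_single (finMate omegaMate i), finMate_val hr,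
    wCoef_omegaMate_of_isOmegaSource hi, one_mul]
  intro l hl
  rw [mul_eq_zero_of_left]
  by_contra h
  exact hl (Fin.ext ((finMate_val hr).symm ▸ (wCoef_ne_zero h).1.2))

lemma sum_wCoef_mul_of_not_isOmegaSource {i : Fin (M.length + 1)} (hi : ¬ IsOmegaSource M i) :
    ∑ l : Fin (M.length + 1), wCoef M i l * v l = 0 :=
  sum_eq_zero fun _ _ => mul_eq_zero_of_left (not_not.mp fun h => hi (wCoef_ne_zero h).1.1) _

lemma sum_mul_dCoef_of_isDTarget {j : Fin (M.length + 1)} (hj : IsDTarget M j) :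
    ∑ l, v l * dCoef M l j = v (finMate dMate j) * Uu ^ dPow M j := by
  have hr := dMate_lt j.isLt (Or.inr hj)
  rw [Fintype.sum_eq_single (finMate dMate j), finMate_val hr, dCoef_dMate_of_isDTarget hj]
  intro l hl
  rw [mul_eq_zero_of_right]
  by_contra h
  exact hl (Fin.ext ((finMate_val hr).symm ▸ (dCoef_ne_zero h).2.2))

lemma sum_mul_dCoef_of_not_isDTarget {j : Fin (M.length + 1)} (hj : ¬ IsDTarget M j) :
    ∑ l, v l * dCoef M l j = 0 :=
  sum_eq_zero fun _ _ => mul_eq_zero_of_right _ (not_not.mp fun h => hj (dCoef_ne_zero h).2.1)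

lemma sum_dCoef_mul_of_isDSource {i : Fin (M.length + 1)} (hi : IsDSource M i) :
    ∑ l : Fin (M.length + 1), dCoef M i l * v l = Uu ^ dPow M i * v (finMate dMate i) := by
  have hr := dMate_lt i.isLt (Or.inl hi)
  rw [Fintype.sum_eq_single (finMate dMate i), finMate_val hr, dCoef_dMate_of_isDSource hi]
  intro l hl
  rw [mul_eq_zero_of_left]
  by_contra h
  exact hl (Fin.ext ((finMate_val hr).symm ▸ (dCoef_ne_zero h).1.2))

lemma sum_dCoef_mul_of_not_isDSource {i : Fin (M.length + 1)} (hi : ¬ IsDSource M i) :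
    ∑ l : Fin (M.length + 1), dCoef M i l * v l = 0 :=
  sum_eq_zero fun _ _ => mul_eq_zero_of_left (not_not.mp fun h => hi (dCoef_ne_zero h).1.1) _

end SumLemmas

section SelfMap

variable {M : List ℤ} {φ : V (M.length + 1) →ₗ[R] V (M.length + 1)}

lemma omega_symCplx (M : List ℤ) : omega (symCplx M) = ofMatrix (wCoef M) := by
  refine LinearMap.ext fun (x : V (M.length + 1)) => funext fun (j : Fin (M.length + 1)) => ?_
  change x j + ∑ l, x l * iCoef M l j = ∑ l, x l * wCoef M l j
  have hdiag : ∑ l, x l * iCoef M l j = x j + ∑ l, x l * wCoef M l j := by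
    simp only [iCoef, mul_add, sum_add_distrib, Fin.val_inj, mul_ite, mul_one, mul_zero,
      sum_ite_eq', mem_univ, if_true]
  rw [hdiag, ← add_assoc, CharTwo.add_self_eq_zero, zero_add]

lemma sum_apply_mul_dCoef (hd : φ ∘ₗ ofMatrix (dCoef M) = ofMatrix (dCoef M) ∘ₗ φ)
    (i j : Fin (M.length + 1)) :
    ∑ l, φ (e i) l * dCoef M l j = ∑ l : Fin (M.length + 1), dCoef M i l * φ (e l) j := by
  have h := congrFun (LinearMap.congr_fun hd (e i)) j
  rw [LinearMap.comp_apply, LinearMap.comp_apply, map_apply_eq_sum φ, ofMatrix_apply] at h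
  simp only [ofMatrix_apply_e] at h
  exact h.symm

lemma coeff_sum_apply_mul_wCoef
    (hω : ∀ x, modU (φ (ofMatrix (wCoef M) x) + ofMatrix (wCoef M) (φ x)))
    (i j : Fin (M.length + 1)) :
    (∑ l, φ (e i) l * wCoef M l j).coeff 0 =
      (∑ l : Fin (M.length + 1), wCoef M i l * φ (e l) j).coeff 0 := by
  have h := hω (e i) j
  rw [Pi.add_apply, coeff_add, map_apply_eq_sum φ, ofMatrix_apply] at h
  simp only [ofMatrix_apply_e] at h
  exact (CharTwo.add_eq_zero.mp h).symm

lemma stdGr_le_of_apply_ne_zero (hgr : GradedMap (fun i => stdGr M i) (fun i => stdGr M i) 0 φ)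
    {a b : Fin (M.length + 1)} (h : φ (e a) b ≠ 0) : stdGr M a ≤ stdGr M b := by
  have := hgr a b _ (leadingCoeff_ne_zero.mpr h)
  simp only at this
  omega

lemma coeff_zero_ne_zero_of_stdGr_eq (hgr : GradedMap (fun i => stdGr M i) (fun i => stdGr M i) 0 φ)
    {a b : Fin (M.length + 1)} (h : φ (e a) b ≠ 0) (hab : stdGr M a = stdGr M b) :
    (φ (e a) b).coeff 0 ≠ 0 := by
  have hlead := leadingCoeff_ne_zero.mpr h
  have := hgr a b _ hlead
  simp only at this
  obtain h0 : (φ (e a) b).natDegree = 0 := by omega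
  rwa [leadingCoeff, h0] at hlead

lemma IsOmegaSource.transport
    (hω : ∀ x, modU (φ (ofMatrix (wCoef M) x) + ofMatrix (wCoef M) (φ x)))
    {a b : Fin (M.length + 1)} (hab : (φ (e a) b).coeff 0 ≠ 0) (hb : IsOmegaSource M b) :
    IsOmegaSource M a ∧ (φ (e (finMate omegaMate a)) (finMate omegaMate b)).coeff 0 ≠ 0 := by
  have hr := omegaMate_lt b.isLt (Or.inl hb)
  have h := coeff_sum_apply_mul_wCoef hω a (finMate omegaMate b)
  rw [sum_mul_wCoef_of_isOmegaTarget _ (by rw [finMate_val hr]; exact hb.mate),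
    finMate_finMate omegaMate_involutive hr] at h
  by_cases ha : IsOmegaSource M a
  · rw [sum_wCoef_mul_of_isOmegaSource _ ha] at h
    exact ⟨ha, h ▸ hab⟩
  · rw [sum_wCoef_mul_of_not_isOmegaSource _ ha, coeff_zero] at h
    exact absurd h hab

lemma IsOmegaTarget.transport
    (hω : ∀ x, modU (φ (ofMatrix (wCoef M) x) + ofMatrix (wCoef M) (φ x)))
    {a b : Fin (M.length + 1)} (hab : (φ (e a) b).coeff 0 ≠ 0) (ha : IsOmegaTarget M a) :
    IsOmegaTarget M b ∧ (φ (e (finMate omegaMate a)) (finMate omegaMate b)).coeff 0 ≠ 0 := by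
  have hr := omegaMate_lt a.isLt (Or.inr ha)
  have h := coeff_sum_apply_mul_wCoef hω (finMate omegaMate a) b
  rw [sum_wCoef_mul_of_isOmegaSource _ (by rw [finMate_val hr]; exact ha.mate),
    finMate_finMate omegaMate_involutive hr] at h
  by_cases hb : IsOmegaTarget M b
  · rw [sum_mul_wCoef_of_isOmegaTarget _ hb] at h
    exact ⟨hb, h ▸ hab⟩
  · rw [sum_mul_wCoef_of_not_isOmegaTarget _ hb, coeff_zero] at h
    exact absurd h.symm hab

lemma IsDSource.transport (hd : φ ∘ₗ ofMatrix (dCoef M) = ofMatrix (dCoef M) ∘ₗ φ)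
    {a b : Fin (M.length + 1)} (hab : φ (e a) b ≠ 0) (hb : IsDSource M b) :
    IsDSource M a ∧ φ (e (finMate dMate a)) (finMate dMate b) ≠ 0 := by
  have hr := dMate_lt b.isLt (Or.inl hb)
  have h := sum_apply_mul_dCoef hd a (finMate dMate b)
  rw [sum_mul_dCoef_of_isDTarget _ (by rw [finMate_val hr]; exact hb.mate),
    finMate_finMate dMate_involutive hr] at h
  have hne : φ (e a) b * Uu ^ dPow M (finMate dMate b) ≠ 0 :=
    mul_ne_zero hab (pow_ne_zero _ X_ne_zero)
  by_cases ha : IsDSource M a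
  · rw [sum_dCoef_mul_of_isDSource _ ha] at h
    exact ⟨ha, right_ne_zero_of_mul (h ▸ hne)⟩
  · rw [sum_dCoef_mul_of_not_isDSource _ ha] at h
    exact absurd h hne

lemma IsDTarget.transport (hd : φ ∘ₗ ofMatrix (dCoef M) = ofMatrix (dCoef M) ∘ₗ φ)
    {a b : Fin (M.length + 1)} (hab : φ (e a) b ≠ 0) (ha : IsDTarget M a) :
    IsDTarget M b ∧ φ (e (finMate dMate a)) (finMate dMate b) ≠ 0 := by
  have hr := dMate_lt a.isLt (Or.inr ha)
  have h := sum_apply_mul_dCoef hd (finMate dMate a) b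
  rw [sum_dCoef_mul_of_isDSource _ (by rw [finMate_val hr]; exact ha.mate),
    finMate_finMate dMate_involutive hr] at h
  have hne : Uu ^ dPow M (finMate dMate a) * φ (e a) b ≠ 0 :=
    mul_ne_zero (pow_ne_zero _ X_ne_zero) hab
  by_cases hb : IsDTarget M b
  · rw [sum_mul_dCoef_of_isDTarget _ hb] at h
    have h' : φ (e (finMate dMate a)) (finMate dMate b) * Uu ^ dPow M b ≠ 0 := h ▸ hne
    exact ⟨hb, left_ne_zero_of_mul h'⟩
  · rw [sum_mul_dCoef_of_not_isDTarget _ hb] at h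
    exact absurd h.symm hne

end SelfMap

def IsModUCycle {n : ℕ} (φ : V n →ₗ[R] V n) (x : ℕ → Fin n) : Prop :=
  (∃ r, 0 < r ∧ Function.Periodic x r) ∧ ∀ t, (φ (e (x t)) (x (t + 1))).coeff 0 ≠ 0

section Cycles

variable {M : List ℤ} {φ : V (M.length + 1) →ₗ[R] V (M.length + 1)} {x : ℕ → Fin (M.length + 1)}

lemma IsModUCycle.apply_ne_zero (hx : IsModUCycle φ x) (t : ℕ) : φ (e (x t)) (x (t + 1)) ≠ 0 :=
  fun h => hx.2 t (by rw [h, coeff_zero])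

lemma IsModUCycle.forall_of_imp_succ (hx : IsModUCycle φ x) {q : Fin (M.length + 1) → Prop}
    (hq : ∀ t, q (x t) → q (x (t + 1))) {s : ℕ} (hs : q (x s)) (u : ℕ) : q (x u) :=
  let ⟨⟨_, hr, hper⟩, _⟩ := hx
  (hper.comp q).forall_of_imp_succ hr hq hs u

lemma IsModUCycle.forall_of_succ_imp (hx : IsModUCycle φ x) {q : Fin (M.length + 1) → Prop}
    (hq : ∀ t, q (x (t + 1)) → q (x t)) {s : ℕ} (hs : q (x s)) (u : ℕ) : q (x u) :=
  let ⟨⟨_, hr, hper⟩, _⟩ := hx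
  (hper.comp q).forall_of_succ_imp hr hq hs u

/-- The last generator carries no `ω`-arrow. -/
lemma IsModUCycle.lt_length (hM : StdParams M)
    (hω : ∀ x, modU (φ (ofMatrix (wCoef M) x) + ofMatrix (wCoef M) (φ x)))
    (hx : IsModUCycle φ x) {s t : ℕ} (hst : x s ≠ x t) (u : ℕ) : (x u : ℕ) < M.length := by
  by_contra hu
  have hu : (x u : ℕ) = M.length := by have := (x u).isLt; omega
  obtain ⟨w, hw⟩ : ∃ w, (x w : ℕ) < M.length := by
    by_contra! h
    exact hst (Fin.ext (by have := (x s).isLt; have := (x t).isLt; have := h s; have := h t; omega))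
  rcases isOmegaSource_or_isOmegaTarget hM hw with hsrc | htgt
  · have := hx.forall_of_succ_imp (q := fun v => IsOmegaSource M v)
      (fun t h => (h.transport hω (hx.2 t)).1) hsrc u
    exact not_isOmegaSource_length hM (hu ▸ this)
  · have := hx.forall_of_imp_succ (q := fun v => IsOmegaTarget M v)
      (fun t h => (h.transport hω (hx.2 t)).1) htgt u
    exact not_isOmegaTarget_length hM (hu ▸ this)

lemma IsModUCycle.pos (hd : φ ∘ₗ ofMatrix (dCoef M) = ofMatrix (dCoef M) ∘ₗ φ)
    (hx : IsModUCycle φ x) {s : ℕ} (hs : IsDSource M (x s) ∨ IsDTarget M (x s)) (u : ℕ) :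
    0 < (x u : ℕ) := by
  rcases hs with hsrc | htgt
  · exact (hx.forall_of_succ_imp (q := fun v => IsDSource M v)
      (fun t h => (h.transport hd (hx.apply_ne_zero t)).1) hsrc u).pos
  · exact (hx.forall_of_imp_succ (q := fun v => IsDTarget M v)
      (fun t h => (h.transport hd (hx.apply_ne_zero t)).1) htgt u).pos

lemma IsModUCycle.omegaShift (hM : StdParams M)
    (hω : ∀ x, modU (φ (ofMatrix (wCoef M) x) + ofMatrix (wCoef M) (φ x)))
    (hx : IsModUCycle φ x) (hlt : ∀ t, (x t : ℕ) < M.length) :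
    IsModUCycle φ (finMate omegaMate ∘ x) := by
  refine ⟨hx.1.imp fun r ⟨hr, hper⟩ => ⟨hr, hper.comp _⟩, ?_⟩
  by_cases hsrc : ∃ s, IsOmegaSource M (x s)
  · obtain ⟨s, hs⟩ := hsrc
    have hall := hx.forall_of_succ_imp (q := fun v => IsOmegaSource M v)
      (fun t h => (h.transport hω (hx.2 t)).1) hs
    exact fun t => ((hall (t + 1)).transport hω (hx.2 t)).2
  · have hall t : IsOmegaTarget M (x t) :=
      (isOmegaSource_or_isOmegaTarget hM (hlt t)).resolve_left fun h => hsrc ⟨t, h⟩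
    exact fun t => ((hall t).transport hω (hx.2 t)).2

/-- Across a `∂`-arrow only the full entries stay nonzero; they return to being nonzero mod `U`
because the grading can only increase along the cycle, hence stays constant. -/
lemma IsModUCycle.dShift (hM : StdParams M)
    (hd : φ ∘ₗ ofMatrix (dCoef M) = ofMatrix (dCoef M) ∘ₗ φ)
    (hgr : GradedMap (fun i => stdGr M i) (fun i => stdGr M i) 0 φ)
    (hx : IsModUCycle φ x) (hpos : ∀ t, 0 < (x t : ℕ)) :
    IsModUCycle φ (finMate dMate ∘ x) := by
  obtain ⟨r, hr, hper⟩ := hx.1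
  have hlink : ∀ t, φ (e (finMate dMate (x t))) (finMate dMate (x (t + 1))) ≠ 0 := by
    by_cases hsrc : ∃ s, IsDSource M (x s)
    · obtain ⟨s, hs⟩ := hsrc
      have hall := hx.forall_of_succ_imp (q := fun v => IsDSource M v)
        (fun t h => (h.transport hd (hx.apply_ne_zero t)).1) hs
      exact fun t => ((hall (t + 1)).transport hd (hx.apply_ne_zero t)).2
    · have hall t : IsDTarget M (x t) :=
        (isDSource_or_isDTarget hM (hpos t) (Nat.lt_succ_iff.mp (x t).isLt)).resolve_left
          fun h => hsrc ⟨t, h⟩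
      exact fun t => ((hall t).transport hd (hx.apply_ne_zero t)).2
  have hconst := (hper.comp fun v => stdGr M (finMate dMate v)).eq_of_monotone hr
    (monotone_nat_of_le_succ fun t => stdGr_le_of_apply_ne_zero hgr (hlink t))
  exact ⟨⟨r, hr, hper.comp _⟩, fun t =>
    coeff_zero_ne_zero_of_stdGr_eq hgr (hlink t) (hconst t (t + 1))⟩

/-- Each cycle can be pushed one step up along the arrows of the standard complex until it
reaches the last generator, which only a constant cycle can do. -/
theorem IsModUCycle.eq (hM : StdParams M)
    (hd : φ ∘ₗ ofMatrix (dCoef M) = ofMatrix (dCoef M) ∘ₗ φ)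
    (hω : ∀ x, modU (φ (ofMatrix (wCoef M) x) + ofMatrix (wCoef M) (φ x)))
    (hgr : GradedMap (fun i => stdGr M i) (fun i => stdGr M i) 0 φ)
    (hx : IsModUCycle φ x) (s t : ℕ) : x s = x t := by
  by_contra hst
  suffices ∀ k (x : ℕ → Fin (M.length + 1)), IsModUCycle φ x → x s ≠ x t →
      M.length ≤ x 0 + k → False from this M.length x hx hst (by omega)
  intro k
  induction k with
  | zero => intro x hx hst h0; have := hx.lt_length hM hω hst 0; omega
  | succ k ih =>
    intro x hx hst hk
    have hlt := hx.lt_length hM hω hst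
    rcases Nat.mod_two_eq_zero_or_one (x 0) with h0 | h0
    · have hr u := omegaMate_lt (x u).isLt (isOmegaSource_or_isOmegaTarget hM (hlt u))
      refine ih _ (hx.omegaShift hM hω hlt)
        (fun h => hst (finMate_injective_of_lt omegaMate_involutive (hr s) (hr t) h)) ?_
      simp only [Function.comp_apply, finMate_val (hr 0), AI.omegaMate, h0, if_true]
      omega
    · have hpos := hx.pos hd (isDSource_or_isDTarget hM (by omega) (hlt 0).le)
      have hr u := dMate_lt (x u).isLt
        (isDSource_or_isDTarget hM (hpos u) (Nat.lt_succ_iff.mp (x u).isLt))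
      refine ih _ (hx.dShift hM hd hgr hpos)
        (fun h => hst (finMate_injective_of_lt dMate_involutive (hr s) (hr t) h)) ?_
      simp only [Function.comp_apply, finMate_val (hr 0), AI.dMate, h0, if_true]
      omega

end Cycles

section Determinant

variable {M : List ℤ} {φ : V (M.length + 1) →ₗ[R] V (M.length + 1)}

lemma coeff_zero_diag_finMate_omegaMate
    (hω : ∀ x, modU (φ (ofMatrix (wCoef M) x) + ofMatrix (wCoef M) (φ x)))
    {a : Fin (M.length + 1)} (ha : IsOmegaSource M a ∨ IsOmegaTarget M a) :
    (φ (e (finMate omegaMate a)) (finMate omegaMate a)).coeff 0 = (φ (e a) a).coeff 0 := by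
  have hr := omegaMate_lt a.isLt ha
  rcases ha with hsrc | htgt
  · have h := coeff_sum_apply_mul_wCoef hω a (finMate omegaMate a)
    rwa [sum_mul_wCoef_of_isOmegaTarget _ (by rw [finMate_val hr]; exact hsrc.mate),
      finMate_finMate omegaMate_involutive hr, sum_wCoef_mul_of_isOmegaSource _ hsrc, eq_comm] at h
  · have h := coeff_sum_apply_mul_wCoef hω (finMate omegaMate a) a
    rwa [sum_mul_wCoef_of_isOmegaTarget _ htgt,
      sum_wCoef_mul_of_isOmegaSource _ (by rw [finMate_val hr]; exact htgt.mate),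
      finMate_finMate omegaMate_involutive hr] at h

lemma diag_finMate_dMate (hd : φ ∘ₗ ofMatrix (dCoef M) = ofMatrix (dCoef M) ∘ₗ φ)
    {a : Fin (M.length + 1)} (ha : IsDSource M a ∨ IsDTarget M a) :
    φ (e (finMate dMate a)) (finMate dMate a) = φ (e a) a := by
  have hr := dMate_lt a.isLt ha
  have hpow : dPow M (finMate dMate a) = dPow M a := by rw [finMate_val hr, dPow_dMate]
  rcases ha with hsrc | htgt
  · have h := sum_apply_mul_dCoef hd a (finMate dMate a)
    rw [sum_mul_dCoef_of_isDTarget _ (by rw [finMate_val hr]; exact hsrc.mate),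
      finMate_finMate dMate_involutive hr, sum_dCoef_mul_of_isDSource _ hsrc, hpow,
      mul_comm] at h
    exact (mul_left_cancel₀ (pow_ne_zero _ X_ne_zero) h).symm
  · have h := sum_apply_mul_dCoef hd (finMate dMate a) a
    rw [sum_mul_dCoef_of_isDTarget _ htgt,
      sum_dCoef_mul_of_isDSource _ (by rw [finMate_val hr]; exact htgt.mate),
      finMate_finMate dMate_involutive hr, hpow, mul_comm] at h
    exact mul_left_cancel₀ (pow_ne_zero _ X_ne_zero) h

/-- Walking `0 → 1 → ⋯ → M.length` along the arrows of the standard complex. -/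
lemma coeff_zero_diag_eq_one (hM : StdParams M)
    (hd : φ ∘ₗ ofMatrix (dCoef M) = ofMatrix (dCoef M) ∘ₗ φ)
    (hω : ∀ x, modU (φ (ofMatrix (wCoef M) x) + ofMatrix (wCoef M) (φ x)))
    (h₀ : (φ (e 0) 0).coeff 0 = 1) (p : Fin (M.length + 1)) : (φ (e p) p).coeff 0 = 1 := by
  suffices ∀ v (hv : v < M.length + 1), (φ (e ⟨v, hv⟩) ⟨v, hv⟩).coeff 0 = 1 from this p p.isLt
  intro v
  induction v with
  | zero => exact fun _ => h₀
  | succ v ih =>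
    intro hv
    set a : Fin (M.length + 1) := ⟨v, by omega⟩
    rcases Nat.mod_two_eq_zero_or_one v with hv2 | hv2
    · have ha : IsOmegaSource M a ∨ IsOmegaTarget M a :=
        isOmegaSource_or_isOmegaTarget hM (p := v) (by omega)
      have : finMate omegaMate a = ⟨v + 1, hv⟩ :=
        Fin.ext (by rw [finMate_val (omegaMate_lt a.isLt ha)]; simp [a, omegaMate, hv2])
      rw [← this, coeff_zero_diag_finMate_omegaMate hω ha, ih]
    · have ha : IsDSource M a ∨ IsDTarget M a :=
        isDSource_or_isDTarget hM (p := v) (by omega) (by omega)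
      have : finMate dMate a = ⟨v + 1, hv⟩ :=
        Fin.ext (by rw [finMate_val (dMate_lt a.isLt ha)]; simp [a, dMate, hv2])
      rw [← this, diag_finMate_dMate hd ha, ih]

lemma exists_coeff_zero_eq_zero_of_ne_one (hM : StdParams M)
    (hd : φ ∘ₗ ofMatrix (dCoef M) = ofMatrix (dCoef M) ∘ₗ φ)
    (hω : ∀ x, modU (φ (ofMatrix (wCoef M) x) + ofMatrix (wCoef M) (φ x)))
    (hgr : GradedMap (fun i => stdGr M i) (fun i => stdGr M i) 0 φ)
    {σ : Equiv.Perm (Fin (M.length + 1))} (hσ : σ ≠ 1) :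
    ∃ i, (φ (e (σ i)) i).coeff 0 = 0 := by
  by_contra! h
  obtain ⟨a, ha⟩ : ∃ a, σ a ≠ a := by
    by_contra! h'
    exact hσ (Equiv.ext h')
  have hx : IsModUCycle φ fun t => (σ⁻¹ ^ t) a := by
    refine ⟨⟨orderOf σ⁻¹, orderOf_pos _, fun t => ?_⟩, fun t => ?_⟩
    · simp [pow_add, pow_orderOf_eq_one]
    · simpa [pow_succ'] using h ((σ⁻¹ ^ (t + 1)) a)
  have := hx.eq hM hd hω hgr 1 0
  simp only [pow_one, pow_zero, Equiv.Perm.coe_one, id_eq] at this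
  exact ha (Equiv.Perm.inv_eq_iff_eq.mp this).symm

theorem det_coeff_zero_eq_one (hM : StdParams M)
    (hd : φ ∘ₗ ofMatrix (dCoef M) = ofMatrix (dCoef M) ∘ₗ φ)
    (hω : ∀ x, modU (φ (ofMatrix (wCoef M) x) + ofMatrix (wCoef M) (φ x)))
    (hgr : GradedMap (fun i => stdGr M i) (fun i => stdGr M i) 0 φ)
    (h₀ : (φ (e 0) 0).coeff 0 = 1) :
    (Matrix.of fun i j : Fin (M.length + 1) => (φ (e i) j).coeff 0).det = 1 := by
  rw [Matrix.det_apply, sum_eq_single 1]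
  · simp [coeff_zero_diag_eq_one hM hd hω h₀]
  · intro σ _ hσ
    obtain ⟨i, hi⟩ := exists_coeff_zero_eq_zero_of_ne_one hM hd hω hgr hσ
    rw [prod_eq_zero (mem_univ i) (by simpa using hi), smul_zero]
  · exact fun h => absurd (mem_univ 1) h

end Determinant

section Homology

variable {M : List ℤ}

lemma symCplx_d_apply_zero (z : V (symCplx M).n) :
    (symCplx M).d z (0 : Fin (M.length + 1)) = 0 :=
  sum_mul_dCoef_of_not_isDTarget z fun h => lt_irrefl _ h.pos

lemma nontorsionClass_e_zero (M : List ℤ) :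
    NontorsionClass (symCplx M).toPreCplx (e (0 : Fin (M.length + 1))) := by
  refine ⟨funext fun (j : Fin (M.length + 1)) => ?_, fun k ⟨z, hz⟩ => ?_⟩
  · change ofMatrix (dCoef M) (e 0) j = 0
    rw [ofMatrix_apply_e]
    by_contra h
    exact lt_irrefl _ (dCoef_ne_zero h).1.1.pos
  · have h0 := symCplx_d_apply_zero z
    rw [hz] at h0
    change Uu ^ k * (if (0 : Fin (M.length + 1)) = 0 then 1 else 0) = 0 at h0
    simp [Uu] at h0

/-- Modulo `U`-torsion, the homology of the standard complex is generated by `T₀`. -/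
lemma not_nontorsionClass_of_apply_zero (hM : StdParams M) {y : V (M.length + 1)}
    (hy : y 0 = 0) : ¬ NontorsionClass (symCplx M).toPreCplx y := by
  rintro ⟨hcyc, hnt⟩
  have hsrc (s : Fin (M.length + 1)) (hs : IsDSource M s) : y s = 0 := by
    have hr := dMate_lt s.isLt (Or.inl hs)
    have h := congrFun hcyc (finMate dMate s)
    change ofMatrix (dCoef M) y (finMate dMate s) = 0 at h
    rw [ofMatrix_apply, sum_mul_dCoef_of_isDTarget _ (by rw [finMate_val hr]; exact hs.mate),
      finMate_finMate dMate_involutive hr] at h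
    exact (mul_eq_zero.mp h).resolve_right (pow_ne_zero _ X_ne_zero)
  classical
  set K := ∑ l : Fin (M.length + 1), dPow M l
  -- pull `U ^ K • y` back along every `∂`-arrow
  refine hnt K ⟨fun t => if IsDSource M t then Uu ^ (K - dPow M t) * y (finMate dMate t) else 0,
    funext fun (j : Fin (M.length + 1)) => ?_⟩
  change ∑ l : Fin (M.length + 1), _ * dCoef M l j = Uu ^ K * y j
  by_cases hj : IsDTarget M j
  · have hr := dMate_lt j.isLt (Or.inr hj)
    have hpow : dPow M (finMate dMate j) = dPow M j := by rw [finMate_val hr, dPow_dMate]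
    rw [sum_mul_dCoef_of_isDTarget _ hj, if_pos (by rw [finMate_val hr]; exact hj.mate),
      finMate_finMate dMate_involutive hr, hpow, mul_right_comm, ← pow_add,
      Nat.sub_add_cancel (single_le_sum (f := fun l : Fin (M.length + 1) => dPow M l)
        (fun l _ => Nat.zero_le _) (mem_univ j))]
  · rw [sum_mul_dCoef_of_not_isDTarget _ hj]
    rcases (j : ℕ).eq_zero_or_pos with h0 | h0
    · rw [show j = 0 from Fin.ext h0, hy, mul_zero]
    · rcases isDSource_or_isDTarget hM h0 (Nat.lt_succ_iff.mp j.isLt) with hs | ht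
      · rw [hsrc j hs, mul_zero]
      · exact absurd ht hj

lemma coeff_zero_apply_e_zero (hM : StdParams M) {φ : V (M.length + 1) →ₗ[R] V (M.length + 1)}
    (hgr : GradedMap (fun i => stdGr M i) (fun i => stdGr M i) 0 φ)
    (hnt : NontorsionClass (symCplx M).toPreCplx (φ (e 0))) : (φ (e 0) 0).coeff 0 = 1 := by
  by_contra h₁
  have h₀ : (φ (e 0) 0).coeff 0 = 0 := (by decide : ∀ c : F2, c ≠ 1 → c = 0) _ h₁
  refine not_nontorsionClass_of_apply_zero hM (ext fun m => ?_) hnt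
  rcases eq_or_ne m 0 with rfl | hm
  · rw [h₀, coeff_zero]
  · by_contra hne
    have := hgr 0 0 m hne
    simp only at this
    omega

end Homology

theorem isLocalMap.bijective_of_stdParams {M : List ℤ} (hM : StdParams M)
    {φ : V (M.length + 1) →ₗ[R] V (M.length + 1)} (hφ : isLocalMap (symCplx M) (symCplx M) φ) :
    Function.Bijective φ := by
  obtain ⟨hmor, hloc⟩ := hφ
  have hd : φ ∘ₗ ofMatrix (dCoef M) = ofMatrix (dCoef M) ∘ₗ φ := hmor.2.1
  have hω : ∀ x, modU (φ (ofMatrix (wCoef M) x) + ofMatrix (wCoef M) (φ x)) := fun x => by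
    have h := hmor.modU_omega_comm (reduced_symCplx M) (reduced_symCplx M) x
    rw [omega_symCplx] at h
    exact h
  have hgr : GradedMap (fun i => stdGr M i) (fun i => stdGr M i) 0 φ := hmor.1
  have h₀ := coeff_zero_apply_e_zero hM hgr (hloc _ (nontorsionClass_e_zero M))
  have hdet : LinearMap.det φ = 1 := by
    ext k
    rcases eq_or_ne k 0 with rfl | hk
    · rw [coeff_zero_det, det_coeff_zero_eq_one hM hd hω hgr h₀, coeff_one_zero]
    · rw [coeff_det_eq_zero hgr hk, coeff_one, if_neg hk]
  rw [← Module.End.isUnit_iff, LinearMap.isUnit_iff_isUnit_det, hdet]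
  exact isUnit_one

theorem splitting_general (A : PreAI) (M : List ℤ) (hM : StdParams M)
    (f : V (M.length + 1) →ₗ[R] V A.n) (g : V A.n →ₗ[R] V (M.length + 1))
    (hf : isLocalMap (symCplx M) A f) (hg : isLocalMap A (symCplx M) g) :
    Function.Bijective (g ∘ₗ f) ∧
    ∃ h : V A.n →ₗ[R] V (M.length + 1), h ∘ₗ f = LinearMap.id := by
  have hbij := (hg.comp hf).bijective_of_stdParams hM
  let ψ := LinearEquiv.ofBijective (g ∘ₗ f) hbij
  exact ⟨hbij, ψ.symm.toLinearMap ∘ₗ g, LinearMap.ext ψ.symm_apply_apply⟩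

/-- splitting theorem: if `f : C → A` and `g : A → C` are local
maps with `C` the standard complex of `A`, then `g ∘ f` is an isomorphism and
the short exact sequence `0 → C → A → A/im f → 0` splits (there is a linear
retraction of `f`). -/
theorem splitting (A : PreAI) (hA : IsAICplx A) (M : List ℤ) (hM : StdParams M)
    (f : V (M.length + 1) →ₗ[R] V A.n) (g : V A.n →ₗ[R] V (M.length + 1))
    (hf : isLocalMap (symCplx M) A f) (hg : isLocalMap A (symCplx M) g) :
    Function.Bijective (g ∘ₗ f) ∧
    ∃ h : V A.n →ₗ[R] V (M.length + 1), h ∘ₗ f = LinearMap.id :=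
  splitting_general A M hM f g hf hg

end AI
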